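/- Let r ≥ 1 and, for each f ∈ {1,…,r}, let c_f ≥ 0 and L_f ≥ 1 a natural number; let t > 0, β ≥ 0, and Λ a real number. Then the function E₁ : ℝ → ℝ defined by E₁(α) = Σ_{f=1}^r c_f · ( α e^{β t} / (α − t) )^{L_f} − (Λ + t) is convex on the open interval (t, ∞), i.e., ConvexOn ℝ (Set.Ioi t) E₁. -/

import Mathlib

/-!
On `(t, ∞)` we have `α e / (α - t) = e + t e (α - t)⁻¹`, a nonnegative convex function of `α`
when `t, e ≥ 0`. Natural powers of a nonnegative convex function are convex, and nonnegative
combinations of convex functions are convex.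
-/

open Set Finset

theorem convexOn_finset_sum {𝕜 E β ι : Type*} [Semiring 𝕜] [PartialOrder 𝕜] [AddCommMonoid E]
    [AddCommMonoid β] [PartialOrder β] [IsOrderedAddMonoid β] [SMul 𝕜 E] [Module 𝕜 β]
    {s : Set E} (hs : Convex 𝕜 s) (u : Finset ι) {f : ι → E → β}
    (hf : ∀ i ∈ u, ConvexOn 𝕜 s (f i)) : ConvexOn 𝕜 s fun x ↦ ∑ i ∈ u, f i x := by
  classical
  induction u using Finset.induction_on with
  | empty => simpa using convexOn_const 0 hs
  | insert i u hi ih =>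
    simp only [sum_insert hi]
    exact (hf i (mem_insert_self i u)).add (ih fun j hj ↦ hf j (mem_insert_of_mem hj))

theorem convexOn_inv_sub (t : ℝ) : ConvexOn ℝ (Ioi t) fun x : ℝ ↦ (x - t)⁻¹ := by
  have h := (convexOn_zpow (𝕜 := ℝ) (-1)).translate_right (-t)
  have hdom : (fun x : ℝ ↦ -t + x) ⁻¹' Ioi 0 = Ioi t := by
    ext x
    simp [neg_add_eq_sub]
  rw [hdom] at h
  exact h.congr fun x _ ↦ by simp [neg_add_eq_sub]

theorem convexOn_mul_div_sub {t k : ℝ} (ht : 0 ≤ t) (hk : 0 ≤ k) :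
    ConvexOn ℝ (Ioi t) fun x : ℝ ↦ x * k / (x - t) := by
  refine (((convexOn_inv_sub t).smul (mul_nonneg ht hk)).add_const k).congr fun x hx ↦ ?_
  have hxt : x - t ≠ 0 := (sub_pos.2 hx).ne'
  simp only [Pi.add_apply, smul_eq_mul]
  field_simp
  ring

theorem constraint42_convex_in_alpha_general
    (r : ℕ) (c : Fin r → ℝ) (hc : ∀ f, 0 ≤ c f)
    (L : Fin r → ℕ)
    (t β Λ : ℝ) (ht : 0 < t) :
    ConvexOn ℝ (Set.Ioi t)
      (fun α : ℝ => ∑ f, c f * (α * Real.exp (β * t) / (α - t)) ^ (L f) - (Λ + t)) := by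
  have hφ := convexOn_mul_div_sub ht.le (Real.exp_pos (β * t)).le
  have hφ₀ : ∀ ⦃α⦄, α ∈ Ioi t → 0 ≤ α * Real.exp (β * t) / (α - t) := fun α hα ↦ by
    have : 0 < α - t := sub_pos.2 hα
    have : 0 < α := ht.trans hα
    positivity
  have hsum := convexOn_finset_sum (convex_Ioi t) univ fun f _ ↦ (hφ.pow hφ₀ (L f)).smul (hc f)
  exact (hsum.add_const (-(Λ + t))).congr fun α _ ↦ (sub_eq_add_neg _ _).symm

/-- The constraint function `E₁(α) = Σ_f c_f (α e^{βt}/(α − t))^{L_f} − (Λ + t)` is convex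
in the service rate `α` on `(t, ∞)`, for nonnegative weights `c_f`, `t > 0`, `β ≥ 0`,
and segment counts `L_f ≥ 1`. -/
theorem constraint42_convex_in_alpha
    (r : ℕ) (hr : 1 ≤ r) (c : Fin r → ℝ) (hc : ∀ f, 0 ≤ c f)
    (L : Fin r → ℕ) (hL : ∀ f, 1 ≤ L f)
    (t β Λ : ℝ) (ht : 0 < t) (hβ : 0 ≤ β) :
    ConvexOn ℝ (Set.Ioi t)
      (fun α : ℝ => ∑ f, c f * (α * Real.exp (β * t) / (α - t)) ^ (L f) - (Λ + t)) :=
  constraint42_convex_in_alpha_general r c hc L t β Λ ht
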